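/- arXiv:1601.04313 — 5 statements merged into one kernel-verified Lean document; each statement's English description precedes it below -/
import Mathlib

section
/- Let L be a nonzero Lie subalgebra of W(A), F = R^L its field of constants, and FL the F-span of L inside Der_K(R). If L is abelian, then FL is abelian; if L is nilpotent, then FL is a nilpotent Lie algebra; if L is solvable, then FL is a solvable Lie algebra. -/
/-!
Since the derivations in `L` kill their field of constants `F`, for `f, g ∈ F` and
`a, b ∈ L` one has `⁅f • a, g • b⁆ = (f * g) • ⁅a, b⁆`. Hence `f ⊗ a ↦ f • a` is a morphism
of `K`-Lie algebras from the base change `F ⊗[K] L` onto `FL`, and abelianness, nilpotency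
and solvability pass from `L` to `F ⊗[K] L` and then to its image.
-/

noncomputable section

/-- The field of constants of a set of `K`-derivations of a field `R`:
`{r ∈ R | D r = 0 for all D ∈ S}`. -/
def derivConstants (K R : Type*) [CommRing K] [Field R] [Algebra K R]
    (S : Set (Derivation K R R)) : Subfield R where
  carrier := {r : R | ∀ D ∈ S, D r = 0}
  mul_mem' := by
    intro a b ha hb D hD
    rw [Derivation.leibniz]
    simp [ha D hD, hb D hD]
  one_mem' := by intro D _; simp
  add_mem' := by intro a b ha hb D hD; simp [ha D hD, hb D hD]
  zero_mem' := by intro D _; simp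
  neg_mem' := by intro a ha D hD; simp [ha D hD]
  inv_mem' := by
    intro a ha D hD
    rcases eq_or_ne a 0 with h | h
    · simp [h]
    · have h1 : D (a * a⁻¹) = 0 := by rw [mul_inv_cancel₀ h]; simp
      rw [Derivation.leibniz, ha D hD] at h1
      simpa [h] using h1

/-- `W(A) = R · Der_K(A)` : the `R`-span, inside `Der_K(R)`, of the set of `K`-derivations
of `R` that map the image of `A` into itself.  Here `R` is the fraction field of the
integral domain `A`. -/
def wAlg (K A R : Type*) [Field K] [CommRing A] [IsDomain A] [Algebra K A]
    [Field R] [Algebra A R] [IsFractionRing A R] [Algebra K R] [IsScalarTower K A R] :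
    Submodule R (Derivation K R R) :=
  Submodule.span R
    {D : Derivation K R R | ∀ a : A, ∃ b : A, D (algebraMap A R a) = algebraMap A R b}

open TensorProduct

theorem Derivation.lie_smul_smul_of_apply_eq_zero {K A : Type*} [CommRing K] [CommRing A]
    [Algebra K A] {D₁ D₂ : Derivation K A A} {f g : A} (h₁ : D₁ g = 0) (h₂ : D₂ f = 0) :
    ⁅f • D₁, g • D₂⁆ = (f * g) • ⁅D₁, D₂⁆ := by
  ext r
  simp only [Derivation.commutator_apply, Derivation.smul_apply, smul_eq_mul,
    Derivation.leibniz, h₁, h₂]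
  ring

instance LieAlgebra.ExtendScalars.instIsLieAbelian {K E L : Type*} [CommRing K] [CommRing E]
    [Algebra K E] [LieRing L] [LieAlgebra K L] [IsLieAbelian L] : IsLieAbelian (E ⊗[K] L) where
  trivial x y := by
    induction x using TensorProduct.induction_on with
    | zero => simp
    | add x₁ x₂ h₁ h₂ => simp [add_lie, h₁, h₂]
    | tmul s a =>
      induction y using TensorProduct.induction_on with
      | zero => simp
      | add y₁ y₂ h₁ h₂ => simp [lie_add, h₁, h₂]
      | tmul t b => simp [LieAlgebra.ExtendScalars.bracket_tmul, trivial_lie_zero]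

theorem Subfield.coe_span_toIntermediateField {K R V : Type*} [Field K] [Field R] [Algebra K R]
    [AddCommGroup V] [Module R V] (F : Subfield R) (hK : ∀ k, algebraMap K R k ∈ F) (s : Set V) :
    (Submodule.span (F.toIntermediateField hK) s : Set V) = Submodule.span F s := by
  ext x
  constructor
  · intro hx
    induction hx using Submodule.span_induction with
    | mem x hx => exact Submodule.subset_span hx
    | zero => exact zero_mem _
    | add x y _ _ hx hy => exact add_mem hx hy
    | smul e x _ hx => exact Submodule.smul_mem _ (⟨e, e.2⟩ : F) hx
  · intro hx
    induction hx using Submodule.span_induction with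
    | mem x hx => exact Submodule.subset_span hx
    | zero => exact zero_mem _
    | add x y _ _ hx hy => exact add_mem hx hy
    | smul f x _ hx => exact Submodule.smul_mem _ (⟨f, f.2⟩ : F.toIntermediateField hK) hx

namespace LieSubalgebra

variable {K R E : Type*} [CommRing K] [CommRing R] [Algebra K R] [CommRing E] [Algebra K E]
  [Algebra E R] [IsScalarTower K E R] (L : LieSubalgebra K (Derivation K R R))
  (hL : ∀ D ∈ L, ∀ e : E, D (algebraMap E R e) = 0)

def smulTensorHom : E ⊗[K] L →ₗ⁅K⁆ Derivation K R R :=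
  { (L.toSubmodule.subtype.liftBaseChange E).restrictScalars K with
    map_lie' := by
      intro x y
      induction x using TensorProduct.induction_on with
      | zero => simp
      | add x₁ x₂ h₁ h₂ => simp_all [add_lie]
      | tmul s a =>
        induction y using TensorProduct.induction_on with
        | zero => simp
        | add y₁ y₂ h₁ h₂ => simp_all [lie_add]
        | tmul t b =>
          change (s * t) • ((⁅a, b⁆ : L) : Derivation K R R) =
            ⁅s • (a : Derivation K R R), t • (b : Derivation K R R)⁆
          rw [algebra_compatible_smul R s, algebra_compatible_smul R t,
            algebra_compatible_smul R (s * t), map_mul,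
            Derivation.lie_smul_smul_of_apply_eq_zero (hL a a.2 t) (hL b b.2 s), coe_bracket] }

theorem coe_smulTensorHom_range :
    ((L.smulTensorHom hL).range : Set (Derivation K R R)) =
      Submodule.span E (L : Set (Derivation K R R)) := by
  change (LinearMap.range (L.toSubmodule.subtype.liftBaseChange E) : Set (Derivation K R R)) = _
  rw [LinearMap.range_liftBaseChange, Submodule.range_subtype]
  rfl

end LieSubalgebra

theorem statement1_general
    (K R : Type*) [Field K] [Field R] [Algebra K R]
    (L : LieSubalgebra K (Derivation K R R))
    (F : Subfield R) (hF : F = derivConstants K R (L : Set (Derivation K R R))) :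
    (IsLieAbelian L →
      ∀ x ∈ Submodule.span F (L : Set (Derivation K R R)),
        ∀ y ∈ Submodule.span F (L : Set (Derivation K R R)), ⁅x, y⁆ = 0) ∧
    (LieModule.IsNilpotent L L →
      ∃ M : LieSubalgebra K (Derivation K R R),
        (M : Set (Derivation K R R)) =
          (Submodule.span F (L : Set (Derivation K R R)) : Set (Derivation K R R)) ∧
        LieModule.IsNilpotent M M) ∧
    (LieAlgebra.IsSolvable L →
      ∃ M : LieSubalgebra K (Derivation K R R),
        (M : Set (Derivation K R R)) =
          (Submodule.span F (L : Set (Derivation K R R)) : Set (Derivation K R R)) ∧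
        LieAlgebra.IsSolvable M) := by
  subst hF
  have hK : ∀ k : K, algebraMap K R k ∈ derivConstants K R L := fun k D _ ↦ D.map_algebraMap k
  have hL (D) (hD : D ∈ L) (e : (derivConstants K R L).toIntermediateField hK) :
      D (algebraMap _ R e) = 0 :=
    e.2 D hD
  set φ := L.smulTensorHom hL
  have hφ : (φ.range : Set (Derivation K R R)) =
      Submodule.span (derivConstants K R L) (L : Set (Derivation K R R)) := by
    rw [L.coe_smulTensorHom_range, Subfield.coe_span_toIntermediateField]
  refine ⟨fun _ x hx y hy ↦ ?_, fun _ ↦ ⟨φ.range, hφ, ?_⟩, fun _ ↦ ⟨φ.range, hφ, ?_⟩⟩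
  · have : IsLieAbelian φ.range := φ.surjective_rangeRestrict.isLieAbelian inferInstance
    rw [← SetLike.mem_coe, ← hφ] at hx hy
    exact congrArg Subtype.val (trivial_lie_zero φ.range φ.range ⟨x, hx⟩ ⟨y, hy⟩)
  · exact φ.surjective_rangeRestrict.lieAlgebra_isNilpotent
  · exact φ.isSolvable_range

/-- Let `L` be a nonzero Lie subalgebra of `W(A)`, `F = R^L` its field of
constants and `FL` the `F`-span of `L` inside `Der_K(R)`.  If `L` is abelian then `FL` is
abelian; if `L` is nilpotent then `FL` is a nilpotent Lie algebra; if `L` is solvable then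
`FL` is a solvable Lie algebra. -/
theorem statement1
    (K A R : Type*) [Field K] [CharZero K] [CommRing A] [IsDomain A] [Algebra K A]
    [Field R] [Algebra A R] [IsFractionRing A R] [Algebra K R] [IsScalarTower K A R]
    (L : LieSubalgebra K (Derivation K R R))
    (hLW : (L : Set (Derivation K R R)) ⊆ (wAlg K A R : Set (Derivation K R R)))
    (hL0 : L ≠ ⊥)
    (F : Subfield R) (hF : F = derivConstants K R (L : Set (Derivation K R R))) :
    (IsLieAbelian L →
      ∀ x ∈ Submodule.span F (L : Set (Derivation K R R)),
        ∀ y ∈ Submodule.span F (L : Set (Derivation K R R)), ⁅x, y⁆ = 0) ∧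
    (LieModule.IsNilpotent L L →
      ∃ M : LieSubalgebra K (Derivation K R R),
        (M : Set (Derivation K R R)) =
          (Submodule.span F (L : Set (Derivation K R R)) : Set (Derivation K R R)) ∧
        LieModule.IsNilpotent M M) ∧
    (LieAlgebra.IsSolvable L →
      ∃ M : LieSubalgebra K (Derivation K R R),
        (M : Set (Derivation K R R)) =
          (Submodule.span F (L : Set (Derivation K R R)) : Set (Derivation K R R)) ∧
        LieAlgebra.IsSolvable M) :=
  statement1_general K R L F hF
end
end

section
/- Let L be a Lie subalgebra of W(A) of finite rank over R, let Z = Z(L) be the center of L, and F = R^L the field of constants of L. Then rk_R(Z) = dim_F(FZ), and FZ (the F-span of Z) is contained in the center Z(FL) of the Lie algebra FL. -/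
/-!
Elements of the centre `Z` commute with `L`, so bracketing an `R`-linear relation
`∑ gᵢ zᵢ = 0` among them with `E ∈ L` gives the relation `∑ E(gᵢ) zᵢ = 0`. Normalising one
coefficient of a shortest relation to `1`, the new relation is shorter, hence trivial: all `gᵢ`
are constants of `L`. So an `F`-basis of `FZ` stays `R`-linearly independent, and it spans `RZ`.
The commutation statements follow from `⁅x, c • y⁆ = x(c) • y + c • ⁅x, y⁆`, since every
element of `FL` kills `F`.
-/

noncomputable section

open Submodule

theorem rank_span_eq_of_linearIndependent_of_tower {F R M : Type*} [Field F] [Field R]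
    [Algebra F R] [AddCommGroup M] [Module R M] [Module F M] [IsScalarTower F R M] (Z : Set M)
    (h : ∀ b ⊆ Z, LinearIndependent F ((↑) : b → M) → LinearIndependent R ((↑) : b → M)) :
    Module.rank R (span R Z) = Module.rank F (span F Z) := by
  obtain ⟨b, hbZ, hspan, hb⟩ := exists_linearIndependent F Z
  rw [← span_span_of_tower F, ← hspan, span_span_of_tower, rank_span_set (h b hbZ hb),
    ← rank_span_set hb]

theorem LinearIndependent.eq_zero_of_sum_smul_eq_zero_of_mem_subfield {R M ι : Type*} [Field R]
    [AddCommGroup M] [Module R M] {F : Subfield R} {v : ι → M} (hv : LinearIndependent F v)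
    {s : Finset ι} {g : ι → R}
    (hgF : ∀ i ∈ s, g i ∈ F) (hg : ∑ i ∈ s, g i • v i = 0) : ∀ i ∈ s, g i = 0 := by
  classical
  let c : ι → F := fun i => if h : g i ∈ F then ⟨g i, h⟩ else 0
  have hc : ∀ i ∈ s, (c i : R) = g i := fun i hi => by simp [c, hgF i hi]
  have hcv : ∑ i ∈ s, c i • v i = 0 := by
    rw [← hg]
    exact Finset.sum_congr rfl fun i hi => by rw [Subfield.smul_def, hc i hi]
  intro i hi
  rw [← hc i hi, linearIndependent_iff'.mp hv s c hcv i hi, ZeroMemClass.coe_zero]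

namespace Derivation

variable {K R : Type*} [CommRing K] [CommRing R] [Algebra K R]

theorem lie_smul_right (D₁ D₂ : Derivation K R R) (r : R) :
    ⁅D₁, r • D₂⁆ = D₁ r • D₂ + r • ⁅D₁, D₂⁆ := by
  ext a
  simp only [commutator_apply, smul_apply, leibniz, add_apply, smul_eq_mul]
  ring

theorem lie_sum_smul_of_lie_eq_zero {ι : Type*} {E : Derivation K R R} {v : ι → Derivation K R R}
    (hv : ∀ i, ⁅E, v i⁆ = 0) (s : Finset ι) (g : ι → R) :
    ⁅E, ∑ i ∈ s, g i • v i⁆ = ∑ i ∈ s, E (g i) • v i := by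
  simp only [lie_sum, lie_smul_right, hv, smul_zero, add_zero]

end Derivation

section Constants

variable {K R : Type*} [CommRing K] [Field R] [Algebra K R] {S : Set (Derivation K R R)}

theorem mem_derivConstants {r : R} : r ∈ derivConstants K R S ↔ ∀ D ∈ S, D r = 0 := Iff.rfl

theorem apply_eq_zero_of_mem_span_derivConstants {F : Subfield R} {D : Derivation K R R}
    (hD : D ∈ span F S) {r : R} (hr : r ∈ derivConstants K R S) :
    D r = 0 := by
  induction hD using span_induction with
  | mem D hD => exact hr D hD
  | zero => rfl
  | add D₁ D₂ _ _ h₁ h₂ => rw [Derivation.add_apply, h₁, h₂, add_zero]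
  | smul c D _ h => rw [Derivation.smul_apply, h, smul_zero]

theorem lie_eq_zero_of_mem_span {F : Subfield R} {x : Derivation K R R} (hx : ∀ c ∈ F, x c = 0)
    {T : Set (Derivation K R R)} (hT : ∀ y ∈ T, ⁅x, y⁆ = 0) {y : Derivation K R R}
    (hy : y ∈ span F T) : ⁅x, y⁆ = 0 := by
  induction hy using span_induction with
  | mem y hy => exact hT y hy
  | zero => exact lie_zero x
  | add y₁ y₂ _ _ h₁ h₂ => rw [lie_add, h₁, h₂, add_zero]
  | smul c y _ h =>
    rw [show c • y = (c : R) • y from rfl, Derivation.lie_smul_right, hx c c.2, h, zero_smul,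
      smul_zero, add_zero]

theorem linearIndependent_of_lie_eq_zero {ι : Type*} {v : ι → Derivation K R R}
    (hv : ∀ i, ∀ E ∈ S, ⁅E, v i⁆ = 0) (hF : LinearIndependent (derivConstants K R S) v) :
    LinearIndependent R v := by
  classical
  rw [linearIndependent_iff']
  intro s
  induction s using Finset.strongInduction with
  | _ s ih =>
  intro g hg j hj
  by_contra hgj
  set g' : ι → R := fun i => (g j)⁻¹ * g i
  have hg'j : g' j = 1 := inv_mul_cancel₀ hgj
  have hg' : ∑ i ∈ s, g' i • v i = 0 := by
    simp only [g', mul_smul, ← Finset.smul_sum, hg, smul_zero]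
  have hg'F : ∀ i ∈ s, g' i ∈ derivConstants K R S := by
    intro i hi E hE
    have hEj : E (g' j) = 0 := by rw [hg'j, E.map_one_eq_zero]
    have hrel : ∑ k ∈ s.erase j, E (g' k) • v k = 0 := by
      rw [Finset.sum_erase s (by rw [hEj, zero_smul]),
        ← Derivation.lie_sum_smul_of_lie_eq_zero (fun k => hv k E hE), hg', lie_zero]
    by_cases hij : i = j
    · rwa [hij]
    · exact ih _ (Finset.erase_ssubset hj) _ hrel i (Finset.mem_erase.mpr ⟨hij, hi⟩)
  exact one_ne_zero (hg'j ▸ hF.eq_zero_of_sum_smul_eq_zero_of_mem_subfield hg'F hg' j hj)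

end Constants

theorem statement2_general
    (K R : Type*) [Field K] [Field R] [Algebra K R]
    (L : LieSubalgebra K (Derivation K R R))
    (F : Subfield R) (hF : F = derivConstants K R (L : Set (Derivation K R R)))
    (Z : Set (Derivation K R R))
    (hZ : Z = {x : Derivation K R R | x ∈ L ∧ ∀ y ∈ L, ⁅x, y⁆ = 0}) :
    Module.rank R (Submodule.span R Z) = Module.rank F (Submodule.span F Z) ∧
    Submodule.span F Z ≤ Submodule.span F (L : Set (Derivation K R R)) ∧
    (∀ x ∈ Submodule.span F Z,
      ∀ y ∈ Submodule.span F (L : Set (Derivation K R R)), ⁅x, y⁆ = 0) := by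
  subst hF hZ
  have hcenter_comm : ∀ z ∈ L, (∀ y ∈ L, ⁅z, y⁆ = 0) →
      ∀ y ∈ span (derivConstants K R L) (L : Set (Derivation K R R)), ⁅z, y⁆ = 0 :=
    fun z hzL hz _ hy => lie_eq_zero_of_mem_span (fun _ hc => mem_derivConstants.mp hc z hzL) hz hy
  refine ⟨?_, span_mono fun x hx => hx.1, fun x hx y hy => ?_⟩
  · refine rank_span_eq_of_linearIndependent_of_tower _ fun b hb hbF => ?_
    exact linearIndependent_of_lie_eq_zero (fun z E hE => by
      rw [← lie_skew, (hb z.2).2 E hE, neg_zero]) hbF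
  · rw [← lie_skew, neg_eq_zero]
    refine lie_eq_zero_of_mem_span (fun _ hc => apply_eq_zero_of_mem_span_derivConstants hy hc)
      (fun z hz => ?_) hx
    rw [← lie_skew, hcenter_comm z hz.1 hz.2 y hy, neg_zero]

/-- Let `L` be a Lie subalgebra of `W(A)` of finite rank over `R`, `Z = Z(L)`
the center of `L` and `F = R^L` the field of constants.  Then `rk_R(Z) = dim_F(FZ)`, and the
`F`-span `FZ` of `Z` is contained in the center of the Lie algebra `FL`. -/
theorem statement2
    (K A R : Type*) [Field K] [CharZero K] [CommRing A] [IsDomain A] [Algebra K A]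
    [Field R] [Algebra A R] [IsFractionRing A R] [Algebra K R] [IsScalarTower K A R]
    (L : LieSubalgebra K (Derivation K R R))
    (hLW : (L : Set (Derivation K R R)) ⊆ (wAlg K A R : Set (Derivation K R R)))
    (hfin : Module.Finite R (Submodule.span R (L : Set (Derivation K R R))))
    (F : Subfield R) (hF : F = derivConstants K R (L : Set (Derivation K R R)))
    (Z : Set (Derivation K R R))
    (hZ : Z = {x : Derivation K R R | x ∈ L ∧ ∀ y ∈ L, ⁅x, y⁆ = 0}) :
    Module.rank R (Submodule.span R Z) = Module.rank F (Submodule.span F Z) ∧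
    Submodule.span F Z ≤ Submodule.span F (L : Set (Derivation K R R)) ∧
    (∀ x ∈ Submodule.span F Z,
      ∀ y ∈ Submodule.span F (L : Set (Derivation K R R)), ⁅x, y⁆ = 0) :=
  statement2_general K R L F hF Z hZ
end
end

section
/- Let L be a Lie subalgebra of W(A) and let I be an ideal of L. Then the K-vector space (RI) ∩ L, where RI is the R-span of I inside Der_K(R), is also an ideal of L. -/
noncomputable section

lemma lie_smul_deriv {K R : Type*} [CommRing K] [CommRing R] [Algebra K R]
    (x z : Derivation K R R) (r : R) :
    ⁅x, r • z⁆ = r • ⁅x, z⁆ + (x r) • z := by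
  ext a
  simp only [Derivation.commutator_apply, Derivation.smul_apply, Derivation.add_apply,
    Derivation.leibniz, smul_eq_mul, map_smul]
  ring

/-- Let `L` be a Lie subalgebra of `W(A)` and `I` an ideal of `L`.  Then the
`K`-vector space `(RI) ∩ L`, where `RI` is the `R`-span of `I` inside `Der_K(R)`, is again an
ideal of `L`. -/
theorem statement4
    (K A R : Type*) [Field K] [CharZero K] [CommRing A] [IsDomain A] [Algebra K A]
    [Field R] [Algebra A R] [IsFractionRing A R] [Algebra K R] [IsScalarTower K A R]
    (L : LieSubalgebra K (Derivation K R R))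
    (hLW : (L : Set (Derivation K R R)) ⊆ (wAlg K A R : Set (Derivation K R R)))
    (I : LieSubalgebra K (Derivation K R R)) (hIL : I ≤ L)
    (hIdeal : ∀ x ∈ L, ∀ y ∈ I, ⁅x, y⁆ ∈ I) :
    ∀ x ∈ L, ∀ y ∈ Submodule.span R (I : Set (Derivation K R R)), y ∈ L →
      ⁅x, y⁆ ∈ Submodule.span R (I : Set (Derivation K R R)) ∧ ⁅x, y⁆ ∈ L := by
  intro x hx y hy hyL
  refine ⟨?_, L.lie_mem hx hyL⟩
  clear hyL
  induction hy using Submodule.span_induction with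
  | mem z hz => exact Submodule.subset_span (hIdeal x hx z hz)
  | zero => simp
  | add a b ha hb iha ihb =>
      rw [lie_add]; exact Submodule.add_mem _ iha ihb
  | smul r z hz ihz =>
      rw [lie_smul_deriv]
      exact Submodule.add_mem _ (Submodule.smul_mem _ _ ihz) (Submodule.smul_mem _ _ hz)
end
end

section
/- Let L be a nilpotent Lie subalgebra of W(A) with rk_R(L) = 1 and F = R^L its field of constants. Then L is abelian and dim_F(FL) = 1. -/
noncomputable section

/-! Fix a nonzero `D ∈ L`; rank one makes every element of `L` a multiple `r • D`, and
`⁅a • D, b • D⁆ = (a * D b - b * D a) • D`. Everything therefore reduces to `D r = 0` for these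
coefficients. Since `ad D` acts on coefficients as `D`, nilpotency of `L` makes `D` nilpotent on
them. If `D r ≠ 0`, the last two nonzero iterates `v` and `u = D v` (so `D u = 0`) make
`ad (v • D)` act on the multiples `c • D` with `D c = 0` as multiplication by `-u`, so
`ad (v • D)` is not nilpotent on `u • D`. Hence the coefficients lie in `F`, `L` is abelian,
and `L` spans the line `F • D`. -/

namespace Derivation

variable {K R : Type*} [CommRing K] [CommRing R] [Algebra K R]

theorem smul_lie_smul (D : Derivation K R R) (a b : R) :
    ⁅a • D, b • D⁆ = (a * D b - b * D a) • D := by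
  ext x
  simp only [commutator_apply, coe_smul, Pi.smul_apply, smul_eq_mul, leibniz]
  ring

theorem lie_smul_self (D : Derivation K R R) (a : R) : ⁅D, a • D⁆ = D a • D := by
  simpa only [one_smul, one_mul, map_one_eq_zero, mul_zero, sub_zero] using D.smul_lie_smul 1 a

theorem iterate_lie_smul_self (D : Derivation K R R) (a : R) (n : ℕ) :
    (fun E => ⁅D, E⁆)^[n] (a • D) = D^[n] a • D := by
  induction n with
  | zero => rfl
  | succ n ih =>
    rw [Function.iterate_succ_apply', ih, lie_smul_self, Function.iterate_succ_apply']

end Derivation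

theorem LieSubalgebra.exists_iterate_lie_eq_zero {K L : Type*} [CommRing K] [LieRing L]
    [LieAlgebra K L] (H : LieSubalgebra K L) [LieRing.IsNilpotent H] {x : L} (hx : x ∈ H) :
    ∃ N : ℕ, ∀ y ∈ H, (fun z => ⁅x, z⁆)^[N] y = 0 := by
  obtain ⟨N, hN⟩ := LieModule.isNilpotent_toEnd_of_isNilpotent K H H ⟨x, hx⟩
  refine ⟨N, fun y hy => ?_⟩
  have hcoe : ∀ n : ℕ, (((LieModule.toEnd K H H ⟨x, hx⟩ ^ n) ⟨y, hy⟩ : H) : L) =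
      (fun z => ⁅x, z⁆)^[n] y := by
    intro n
    induction n with
    | zero => rfl
    | succ n ih =>
      rw [pow_succ', Module.End.mul_apply, LieModule.toEnd_apply_apply,
        LieSubalgebra.coe_bracket, ih, Function.iterate_succ_apply']
  rw [← hcoe, hN]
  rfl

namespace Derivation

variable {K R : Type*} [CommRing K] [Field R] [Algebra K R]
  {L : LieSubalgebra K (Derivation K R R)} [LieRing.IsNilpotent L] {D : Derivation K R R}

theorem eq_zero_of_smul_mem_of_apply_eq {u v : R} (hD : D ≠ 0) (hu : u • D ∈ L)
    (hv : v • D ∈ L) (hDu : D u = 0) (hDv : D v = u) : u = 0 := by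
  have hconst : ∀ k : ℕ, D ((-u) ^ k * u) = 0 := fun k => by
    rw [leibniz, leibniz_pow, map_neg, hDu]
    simp
  have hiter : ∀ k : ℕ, (fun E => ⁅v • D, E⁆)^[k] (u • D) = ((-u) ^ k * u) • D := fun k => by
    induction k with
    | zero => simp
    | succ k ih =>
      rw [Function.iterate_succ_apply', ih, smul_lie_smul, hconst, hDv]
      congr 1
      ring
  obtain ⟨N, hN⟩ := L.exists_iterate_lie_eq_zero hv
  have h := hN _ hu
  rw [hiter, smul_eq_zero, or_iff_left hD, mul_eq_zero] at h
  exact h.elim (fun h => neg_eq_zero.1 (pow_eq_zero_iff'.1 h).1) id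

theorem apply_eq_zero_of_smul_mem (hDL : D ∈ L) (hD : D ≠ 0) {r : R}
    (hr : r • D ∈ L) : D r = 0 := by
  obtain ⟨N, hN⟩ := L.exists_iterate_lie_eq_zero hDL
  have hNr : D^[N] r = 0 := by
    simpa [hD, iterate_lie_smul_self] using hN _ hr
  clear hN
  induction N generalizing r with
  | zero => simp [show r = 0 from hNr]
  | succ N ih =>
    have hDr : D r • D ∈ L := D.lie_smul_self r ▸ L.lie_mem hDL hr
    have hDDr : D (D r) = 0 := ih hDr (by rwa [← Function.iterate_succ_apply])
    exact eq_zero_of_smul_mem_of_apply_eq hD hDr hr hDDr rfl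

end Derivation

theorem rank_span_eq_one_iff_exists_smul_eq {R M : Type*} [DivisionRing R] [AddCommGroup M]
    [Module R M] {S : Set M} :
    Module.rank R (Submodule.span R S) = 1 ↔ ∃ x ∈ S, x ≠ 0 ∧ ∀ y ∈ S, ∃ r : R, r • x = y := by
  rw [rank_submodule_eq_one_iff]
  constructor
  · rintro ⟨v, hv, hv0, hle⟩
    have hS : ∀ y ∈ S, ∃ r : R, r • v = y := fun y hy =>
      Submodule.mem_span_singleton.1 (hle (Submodule.subset_span hy))
    obtain ⟨x, hxS, hx0⟩ : ∃ x ∈ S, x ≠ 0 := by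
      by_contra! h
      exact hv0 (by simpa [Submodule.span_eq_bot.2 h] using hv)
    obtain ⟨s, rfl⟩ := hS x hxS
    refine ⟨s • v, hxS, hx0, fun y hy => ?_⟩
    obtain ⟨t, rfl⟩ := hS y hy
    have hs : s ≠ 0 := by rintro rfl; simp at hx0
    exact ⟨t * s⁻¹, by rw [smul_smul, inv_mul_cancel_right₀ hs]⟩
  · rintro ⟨x, hxS, hx0, hS⟩
    refine ⟨x, Submodule.subset_span hxS, hx0, Submodule.span_le.2 fun y hy => ?_⟩
    exact Submodule.mem_span_singleton.2 (hS y hy)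

theorem statement6_general
    (K R : Type*) [Field K] [Field R] [Algebra K R]
    (L : LieSubalgebra K (Derivation K R R))
    (hnil : LieRing.IsNilpotent L)
    (hrk : Module.rank R (Submodule.span R (L : Set (Derivation K R R))) = 1)
    (F : Subfield R) (hF : F = derivConstants K R (L : Set (Derivation K R R))) :
    IsLieAbelian L ∧
    Module.rank F (Submodule.span F (L : Set (Derivation K R R))) = 1 := by
  subst hF
  obtain ⟨D, hDL, hD0, hL⟩ := rank_span_eq_one_iff_exists_smul_eq.1 hrk
  have hcoeff : ∀ r : R, r • D ∈ L → D r = 0 := fun r hr =>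
    D.apply_eq_zero_of_smul_mem hDL hD0 hr
  refine ⟨⟨fun x y => ?_⟩, rank_span_eq_one_iff_exists_smul_eq.2 ⟨D, hDL, hD0, fun E hE => ?_⟩⟩
  · obtain ⟨a, ha⟩ := hL x x.2
    obtain ⟨b, hb⟩ := hL y y.2
    ext1
    rw [LieSubalgebra.coe_bracket, ← ha, ← hb, D.smul_lie_smul,
      hcoeff a (ha ▸ x.2), hcoeff b (hb ▸ y.2)]
    simp
  · obtain ⟨r, rfl⟩ := hL E hE
    refine ⟨⟨r, fun E' hE' => ?_⟩, rfl⟩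
    obtain ⟨s, rfl⟩ := hL E' hE'
    simp [hcoeff r hE]

/-- Let `L` be a nilpotent Lie subalgebra of `W(A)` with `rk_R(L) = 1` and
`F = R^L` its field of constants.  Then `L` is abelian and `dim_F(FL) = 1`. -/
theorem statement6
    (K A R : Type*) [Field K] [CharZero K] [CommRing A] [IsDomain A] [Algebra K A]
    [Field R] [Algebra A R] [IsFractionRing A R] [Algebra K R] [IsScalarTower K A R]
    (L : LieSubalgebra K (Derivation K R R))
    (hLW : (L : Set (Derivation K R R)) ⊆ (wAlg K A R : Set (Derivation K R R)))
    (hnil : LieRing.IsNilpotent L)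
    (hrk : Module.rank R (Submodule.span R (L : Set (Derivation K R R))) = 1)
    (F : Subfield R) (hF : F = derivConstants K R (L : Set (Derivation K R R))) :
    IsLieAbelian L ∧
    Module.rank F (Submodule.span F (L : Set (Derivation K R R))) = 1 :=
  statement6_general K R L hnil hrk F hF
end
end

section
/- Let D₁, D₂, D₃ ∈ W(A) and a, b ∈ R be such that D₁(a) = D₁(b) = 0, D₂(a) = 1, D₂(b) = 0, D₃(a) = 0, D₃(b) = 1, and let F = R^{D₁} ∩ R^{D₂} ∩ R^{D₃} be the common field of constants. Let m ≥ 1 and k ≥ 1 be integers. If c ∈ R satisfies D₁(c) = 0, [D₂, D₃](c) = 0, D₂(c) lies in the F-span of {aⁱbʲ/(i!·j!) : 0 ≤ i ≤ m−1, 0 ≤ j ≤ k}, and D₃(c) lies in the F-span of {aⁱbʲ/(i!·j!) : 0 ≤ i ≤ m, 0 ≤ j ≤ k−1}, then c lies in the F-span of {aⁱbʲ/(i!·j!) : 0 ≤ i ≤ m, 0 ≤ j ≤ k}. -/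
/-!
Write `V m k` for the `F`-span of the monomials `aⁱ bʲ / (i! j!)` with `i ≤ m`, `j ≤ k`.
Since `D₂` kills `F` and `b` and acts on these monomials as `∂/∂a`, `D₂ c ∈ V (m-1) k` has an
antiderivative `y ∈ V m k`, and `z = c - y` is a `D₂`-constant. The commutator `⁅D₂, D₃⁆` kills
`V m k` and `c`, so `D₃ z ∈ V m (k-1)` is a `D₂`-constant too. An element of `V` killed by `D₂`
contains no `a`: the Euler operator `a • D₂` multiplies `aⁱ bʲ / (i! j!)` by `i`. Hence
`D₃ z ∈ V 0 (k-1)`, which has a `D₃`-antiderivative `w ∈ V 0 k`, also killed by `D₂`.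
Now `z - w` is killed by `D₁`, `D₂` and `D₃`, i.e. lies in `F`, and `c = y + w + (z - w)`.
-/

noncomputable section

open Nat

section DividedPowers

variable {R : Type*} [Field R] {F : Subfield R} {a b : R}

def divPowMonomial (a b : R) (i j : ℕ) : R :=
  a ^ i * b ^ j / ((i ! : R) * (j ! : R))

theorem divPowMonomial_comm (a b : R) (i j : ℕ) :
    divPowMonomial a b i j = divPowMonomial b a j i := by
  rw [divPowMonomial, divPowMonomial, mul_comm (a ^ i), mul_comm (i ! : R)]

theorem divPowMonomial_zero_zero (a b : R) : divPowMonomial a b 0 0 = 1 := by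
  simp [divPowMonomial]

def divPowMonomials (a b : R) (m k : ℕ) : Set R :=
  {x | ∃ i ≤ m, ∃ j ≤ k, x = divPowMonomial a b i j}

def divPowSpan (F : Subfield R) (a b : R) (m k : ℕ) : Submodule F R :=
  Submodule.span F (divPowMonomials a b m k)

theorem divPowMonomial_mem_divPowSpan {m k i j : ℕ} (hi : i ≤ m) (hj : j ≤ k) :
    divPowMonomial a b i j ∈ divPowSpan F a b m k :=
  Submodule.subset_span ⟨i, hi, j, hj, rfl⟩

theorem divPowSpan_comm (F : Subfield R) (a b : R) (m k : ℕ) :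
    divPowSpan F a b m k = divPowSpan F b a k m := by
  unfold divPowSpan
  congr 1
  ext x
  constructor <;>
  · rintro ⟨i, hi, j, hj, rfl⟩
    exact ⟨j, hj, i, hi, divPowMonomial_comm _ _ _ _⟩

theorem divPowSpan_mono {m m' k k' : ℕ} (hm : m ≤ m') (hk : k ≤ k') :
    divPowSpan F a b m k ≤ divPowSpan F a b m' k' :=
  Submodule.span_mono fun _ ⟨i, hi, j, hj, hx⟩ => ⟨i, hi.trans hm, j, hj.trans hk, hx⟩

theorem coe_mem_divPowSpan (f : F) (m k : ℕ) : (f : R) ∈ divPowSpan F a b m k := by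
  simpa [Subfield.smul_def, divPowMonomial_zero_zero] using
    Submodule.smul_mem _ f (divPowMonomial_mem_divPowSpan (F := F) (a := a) (b := b)
      (zero_le m) (zero_le k))

end DividedPowers

namespace Derivation

variable {K R : Type*} [Field K] [Field R] [Algebra K R] (D : Derivation K R R)
  {F : Subfield R} {a b : R}

theorem map_div_natCast (x : R) (n : ℕ) : D (x / n) = D x / n := by
  rw [div_eq_mul_inv, D.leibniz, D.leibniz_inv, D.map_natCast]
  simp [div_eq_mul_inv, mul_comm]

theorem map_divPowMonomial (i j : ℕ) :
    D (divPowMonomial a b i j) =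
      (i * a ^ (i - 1) * D a * b ^ j + j * a ^ i * b ^ (j - 1) * D b) /
        ((i ! : R) * (j ! : R)) := by
  rw [divPowMonomial, ← Nat.cast_mul, D.map_div_natCast, D.leibniz, D.leibniz_pow,
    D.leibniz_pow]
  simp only [nsmul_eq_mul, smul_eq_mul, Nat.cast_mul]
  ring

theorem map_divPowMonomial_eq_zero (ha : D a = 0) (hb : D b = 0) (i j : ℕ) :
    D (divPowMonomial a b i j) = 0 := by
  simp [D.map_divPowMonomial, ha, hb]

theorem map_divPowMonomial_zero (hb : D b = 0) (j : ℕ) : D (divPowMonomial a b 0 j) = 0 := by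
  simp [D.map_divPowMonomial, hb]

theorem map_divPowMonomial_succ [CharZero R] (ha : D a = 1) (hb : D b = 0) (i j : ℕ) :
    D (divPowMonomial a b (i + 1) j) = divPowMonomial a b i j := by
  rw [D.map_divPowMonomial, ha, hb, divPowMonomial, Nat.factorial_succ, Nat.add_sub_cancel]
  push_cast
  field_simp
  ring

theorem mul_map_divPowMonomial (ha : D a = 1) (hb : D b = 0) (i j : ℕ) :
    a * D (divPowMonomial a b i j) = i * divPowMonomial a b i j := by
  rw [D.map_divPowMonomial, ha, hb, divPowMonomial]
  rcases i with _ | i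
  · simp
  rw [Nat.add_sub_cancel, pow_succ]
  ring

def toLinearMapOfMapEqZero (hD : ∀ r ∈ F, D r = 0) : R →ₗ[F] R where
  toFun := D
  map_add' := map_add D
  map_smul' f x := by
    rw [Subfield.smul_def, smul_eq_mul, D.leibniz, hD f f.2]
    simp [Subfield.smul_def]

section Span

variable (hD : ∀ r ∈ F, D r = 0)
include hD

theorem map_mem_of_mem_divPowSpan {N : Submodule F R} {m k : ℕ}
    (hN : ∀ y ∈ divPowMonomials a b m k, D y ∈ N) {x : R} (hx : x ∈ divPowSpan F a b m k) :
    D x ∈ N :=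
  (Submodule.map_span_le (D.toLinearMapOfMapEqZero hD) _ N).2 hN (Submodule.mem_map_of_mem hx)

theorem map_eq_zero_of_mem_divPowSpan (ha : D a = 0) (hb : D b = 0) {m k : ℕ} {x : R}
    (hx : x ∈ divPowSpan F a b m k) : D x = 0 := by
  refine (Submodule.mem_bot F).1 (D.map_mem_of_mem_divPowSpan hD ?_ hx)
  rintro _ ⟨i, -, j, -, rfl⟩
  exact (Submodule.mem_bot F).2 (D.map_divPowMonomial_eq_zero ha hb i j)

theorem map_eq_zero_of_mem_divPowSpan_zero (hb : D b = 0) {k : ℕ} {x : R}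
    (hx : x ∈ divPowSpan F a b 0 k) : D x = 0 := by
  refine (Submodule.mem_bot F).1 (D.map_mem_of_mem_divPowSpan hD ?_ hx)
  rintro _ ⟨i, hi, j, -, rfl⟩
  rw [Nat.le_zero.1 hi]
  exact (Submodule.mem_bot F).2 (D.map_divPowMonomial_zero hb j)

variable [CharZero R] (ha : D a = 1) (hb : D b = 0)
include ha hb

theorem map_mem_divPowSpan_of_mem_succ {m k : ℕ} {x : R}
    (hx : x ∈ divPowSpan F a b (m + 1) k) : D x ∈ divPowSpan F a b m k := by
  refine D.map_mem_of_mem_divPowSpan hD ?_ hx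
  rintro _ ⟨_ | i, hi, j, hj, rfl⟩
  · rw [D.map_divPowMonomial_zero hb]
    exact zero_mem _
  · rw [D.map_divPowMonomial_succ ha hb]
    exact divPowMonomial_mem_divPowSpan (Nat.le_of_succ_le_succ hi) hj

theorem exists_map_eq_of_mem_divPowSpan {m k : ℕ} {x : R}
    (hx : x ∈ divPowSpan F a b m k) : ∃ y ∈ divPowSpan F a b (m + 1) k, D y = x := by
  have hle : divPowSpan F a b m k ≤
      (divPowSpan F a b (m + 1) k).map (D.toLinearMapOfMapEqZero hD) := by
    refine Submodule.span_le.2 ?_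
    rintro _ ⟨i, hi, j, hj, rfl⟩
    exact ⟨_, divPowMonomial_mem_divPowSpan (Nat.succ_le_succ hi) hj,
      D.map_divPowMonomial_succ ha hb i j⟩
  exact hle hx

/-- `x ↦ a * D x` multiplies `divPowMonomial a b i j` by its `a`-degree `i`, so subtracting
`a * D x / (m + 1)` cancels the monomials of `a`-degree `m + 1`. -/
theorem sub_mul_map_div_mem_divPowSpan {m k : ℕ} {x : R}
    (hx : x ∈ divPowSpan F a b (m + 1) k) :
    x - a * D x / (m + 1) ∈ divPowSpan F a b m k := by
  let T : R →ₗ[F] R := LinearMap.id -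
    LinearMap.mulLeft F (a / (m + 1)) ∘ₗ D.toLinearMapOfMapEqZero hD
  have hT : ∀ y, T y = y - a * D y / (m + 1) := fun y => by
    simp only [T, LinearMap.sub_apply, LinearMap.id_apply, LinearMap.comp_apply,
      LinearMap.mulLeft_apply]
    rw [toLinearMapOfMapEqZero, LinearMap.coe_mk, AddHom.coe_mk]
    ring
  have hm : (m : R) + 1 ≠ 0 := Nat.cast_add_one_ne_zero m
  have hle := (Submodule.map_span_le T (divPowMonomials a b (m + 1) k) _).2 <| by
    rintro _ ⟨i, hi, j, hj, rfl⟩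
    rw [hT, D.mul_map_divPowMonomial ha hb]
    rcases hi.lt_or_eq with hi | rfl
    · have hcoef : divPowMonomial a b i j - i * divPowMonomial a b i j / (m + 1) =
          (((m + 1 - i : ℚ) / (m + 1) : ℚ) : F) • divPowMonomial a b i j := by
        rw [Subfield.smul_def, smul_eq_mul]
        push_cast
        field_simp
      rw [hcoef]
      exact Submodule.smul_mem _ _ (divPowMonomial_mem_divPowSpan (Nat.le_of_lt_succ hi) hj)
    · rw [Nat.cast_add_one, mul_div_cancel_left₀ _ hm, sub_self]
      exact zero_mem _
  simpa [hT] using hle (Submodule.mem_map_of_mem hx)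

theorem mem_divPowSpan_zero_of_map_eq_zero {m k : ℕ} {x : R}
    (hx : x ∈ divPowSpan F a b m k) (hDx : D x = 0) : x ∈ divPowSpan F a b 0 k := by
  induction m with
  | zero => exact hx
  | succ m ih => exact ih (by simpa [hDx] using D.sub_mul_map_div_mem_divPowSpan hD ha hb hx)

end Span

theorem exists_mem_divPowSpan_map_sub_eq_zero [CharZero R] {D₂ D₃ : Derivation K R R}
    (hF₂ : ∀ r ∈ F, D₂ r = 0) (hF₃ : ∀ r ∈ F, D₃ r = 0)
    (ha₂ : D₂ a = 1) (hb₂ : D₂ b = 0) (ha₃ : D₃ a = 0) (hb₃ : D₃ b = 1) {m k : ℕ} {c : R}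
    (hc : ⁅D₂, D₃⁆ c = 0) (hc₂ : D₂ c ∈ divPowSpan F a b m (k + 1))
    (hc₃ : D₃ c ∈ divPowSpan F a b (m + 1) k) :
    ∃ v ∈ divPowSpan F a b (m + 1) (k + 1), D₂ (c - v) = 0 ∧ D₃ (c - v) = 0 := by
  have hF₂₃ : ∀ r ∈ F, ⁅D₂, D₃⁆ r = 0 := fun r hr => by
    simp [commutator_apply, hF₂ r hr, hF₃ r hr]
  obtain ⟨y, hy, hD₂y⟩ := D₂.exists_map_eq_of_mem_divPowSpan hF₂ ha₂ hb₂ hc₂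
  have hD₃z : D₃ (c - y) ∈ divPowSpan F a b (m + 1) k := by
    rw [map_sub]
    refine sub_mem hc₃ ?_
    rw [divPowSpan_comm] at hy ⊢
    exact D₃.map_mem_divPowSpan_of_mem_succ hF₃ hb₃ ha₃ hy
  have hD₂D₃z : D₂ (D₃ (c - y)) = 0 := by
    have h := ⁅D₂, D₃⁆.map_eq_zero_of_mem_divPowSpan hF₂₃
      (by simp [commutator_apply, ha₂, ha₃]) (by simp [commutator_apply, hb₂, hb₃]) hy
    rw [commutator_apply] at hc
    rw [commutator_apply, hD₂y] at h
    rw [map_sub, map_sub]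
    linear_combination hc - h
  obtain ⟨w, hw, hD₃w⟩ : ∃ w ∈ divPowSpan F a b 0 (k + 1), D₃ w = D₃ (c - y) := by
    have h := D₂.mem_divPowSpan_zero_of_map_eq_zero hF₂ ha₂ hb₂ hD₃z hD₂D₃z
    rw [divPowSpan_comm] at h ⊢
    exact D₃.exists_map_eq_of_mem_divPowSpan hF₃ hb₃ ha₃ h
  refine ⟨y + w, add_mem hy (divPowSpan_mono (zero_le _) le_rfl hw), ?_, ?_⟩
  · rw [sub_add_eq_sub_sub, map_sub, map_sub, hD₂y, sub_self,
      D₂.map_eq_zero_of_mem_divPowSpan_zero hF₂ hb₂ hw, sub_zero]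
  · rw [sub_add_eq_sub_sub, map_sub, hD₃w, sub_self]

end Derivation

theorem statement9_general
    (K R : Type*) [Field K] [CharZero K]
    [Field R] [Algebra K R]
    (D₁ D₂ D₃ : Derivation K R R)
    (a b : R)
    (ha₁ : D₁ a = 0) (hb₁ : D₁ b = 0)
    (ha₂ : D₂ a = 1) (hb₂ : D₂ b = 0)
    (ha₃ : D₃ a = 0) (hb₃ : D₃ b = 1)
    (F : Subfield R) (hF : F = derivConstants K R {D₁, D₂, D₃})
    (m k : ℕ) (hm : 1 ≤ m) (hk : 1 ≤ k)
    (c : R) (hc₁ : D₁ c = 0) (hc₂₃ : ⁅D₂, D₃⁆ c = 0)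
    (hc₂ : D₂ c ∈ Submodule.span F
      {x : R | ∃ i ≤ m - 1, ∃ j ≤ k,
        x = a ^ i * b ^ j / ((Nat.factorial i : R) * (Nat.factorial j : R))})
    (hc₃ : D₃ c ∈ Submodule.span F
      {x : R | ∃ i ≤ m, ∃ j ≤ k - 1,
        x = a ^ i * b ^ j / ((Nat.factorial i : R) * (Nat.factorial j : R))}) :
    c ∈ Submodule.span F
      {x : R | ∃ i ≤ m, ∃ j ≤ k,
        x = a ^ i * b ^ j / ((Nat.factorial i : R) * (Nat.factorial j : R))} := by
  have : CharZero R := charZero_of_injective_algebraMap (algebraMap K R).injective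
  have hconst : ∀ D ∈ ({D₁, D₂, D₃} : Set (Derivation K R R)), ∀ r ∈ F, D r = 0 := by
    subst hF
    exact fun D hD r hr => hr D hD
  obtain ⟨m, rfl⟩ : ∃ m', m = m' + 1 := ⟨m - 1, (Nat.sub_add_cancel hm).symm⟩
  obtain ⟨k, rfl⟩ : ∃ k', k = k' + 1 := ⟨k - 1, (Nat.sub_add_cancel hk).symm⟩
  change D₂ c ∈ divPowSpan F a b m (k + 1) at hc₂
  change D₃ c ∈ divPowSpan F a b (m + 1) k at hc₃
  change c ∈ divPowSpan F a b (m + 1) (k + 1)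
  obtain ⟨v, hv, hD₂, hD₃⟩ := Derivation.exists_mem_divPowSpan_map_sub_eq_zero
    (hconst D₂ (by simp)) (hconst D₃ (by simp)) ha₂ hb₂ ha₃ hb₃ hc₂₃ hc₂ hc₃
  have hD₁ : D₁ (c - v) = 0 := by
    rw [map_sub, hc₁, D₁.map_eq_zero_of_mem_divPowSpan (hconst D₁ (by simp)) ha₁ hb₁ hv,
      sub_zero]
  have hcv : c - v ∈ F := by
    rw [hF]
    rintro D (rfl | rfl | rfl) <;> assumption
  rw [← sub_add_cancel c v]
  exact add_mem (coe_mem_divPowSpan ⟨_, hcv⟩ _ _) hv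

/-- Let `D₁, D₂, D₃ ∈ W(A)` and `a, b ∈ R` with `D₁(a) = D₁(b) = 0`,
`D₂(a) = 1`, `D₂(b) = 0`, `D₃(a) = 0`, `D₃(b) = 1`, and let
`F = R^{D₁} ∩ R^{D₂} ∩ R^{D₃}`.  Let `m, k ≥ 1`.  If `c ∈ R` satisfies `D₁(c) = 0`,
`[D₂, D₃](c) = 0`, `D₂(c) ∈ F⟨aⁱbʲ/(i!·j!) : i ≤ m−1, j ≤ k⟩` and
`D₃(c) ∈ F⟨aⁱbʲ/(i!·j!) : i ≤ m, j ≤ k−1⟩`, then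
`c ∈ F⟨aⁱbʲ/(i!·j!) : i ≤ m, j ≤ k⟩`. -/
theorem statement9
    (K A R : Type*) [Field K] [CharZero K] [CommRing A] [IsDomain A] [Algebra K A]
    [Field R] [Algebra A R] [IsFractionRing A R] [Algebra K R] [IsScalarTower K A R]
    (D₁ D₂ D₃ : Derivation K R R)
    (hD₁ : D₁ ∈ wAlg K A R) (hD₂ : D₂ ∈ wAlg K A R) (hD₃ : D₃ ∈ wAlg K A R)
    (a b : R)
    (ha₁ : D₁ a = 0) (hb₁ : D₁ b = 0)
    (ha₂ : D₂ a = 1) (hb₂ : D₂ b = 0)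
    (ha₃ : D₃ a = 0) (hb₃ : D₃ b = 1)
    (F : Subfield R) (hF : F = derivConstants K R {D₁, D₂, D₃})
    (m k : ℕ) (hm : 1 ≤ m) (hk : 1 ≤ k)
    (c : R) (hc₁ : D₁ c = 0) (hc₂₃ : ⁅D₂, D₃⁆ c = 0)
    (hc₂ : D₂ c ∈ Submodule.span F
      {x : R | ∃ i ≤ m - 1, ∃ j ≤ k,
        x = a ^ i * b ^ j / ((Nat.factorial i : R) * (Nat.factorial j : R))})
    (hc₃ : D₃ c ∈ Submodule.span F
      {x : R | ∃ i ≤ m, ∃ j ≤ k - 1,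
        x = a ^ i * b ^ j / ((Nat.factorial i : R) * (Nat.factorial j : R))}) :
    c ∈ Submodule.span F
      {x : R | ∃ i ≤ m, ∃ j ≤ k,
        x = a ^ i * b ^ j / ((Nat.factorial i : R) * (Nat.factorial j : R))} :=
  statement9_general K R D₁ D₂ D₃ a b ha₁ hb₁ ha₂ hb₂ ha₃ hb₃ F hF m k hm hk c hc₁ hc₂₃ hc₂ hc₃
end
end
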